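/- arXiv:2401.04596 — 2 statements merged into one kernel-verified Lean document; each statement's English description precedes it below -/
import Mathlib

section
/- For every maximally entangled state η̂⋆ of the disc theory (i.e. η̂⋆ ∈ GL(Ω_∞)), there exist angles α⋆, β⋆, γ⋆, δ⋆ ∈ [0, 2π) such that for every state η̂ of Ω_∞ ⊗_max Ω_∞ and all binary observables A₀, A₁, B₀, B₁ on Ω_∞ one has |C[η̂; A₀,A₁; B₀,B₁]| ≤ |C[η̂⋆; E_∞(α⋆),E_∞(β⋆); E_∞(γ⋆),E_∞(δ⋆)]|. -/
noncomputable section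

/-- Standard inner product on `ℝ³`. -/
def dot3 (v w : Fin 3 → ℝ) : ℝ := ∑ i, v i * w i

/-- The disc state space `Ω_∞ = {(x,y,1) : x² + y² ≤ 1}`. -/
def OmegaD : Set (Fin 3 → ℝ) := {v | v 0 ^ 2 + v 1 ^ 2 ≤ 1 ∧ v 2 = 1}

/-- The unit effect `u = (0,0,1)`. -/
def uEff : Fin 3 → ℝ := ![0, 0, 1]

/-- The pure effects `e_∞(θ) = ½(cos θ, sin θ, 1)`. -/
def eD (t : ℝ) : Fin 3 → ℝ := ![Real.cos t / 2, Real.sin t / 2, 1 / 2]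

/-- The effect space `E_∞`. -/
def EffD : Set (Fin 3 → ℝ) := {f | ∀ ω ∈ OmegaD, dot3 f ω ∈ Set.Icc (0 : ℝ) 1}

/-- The positive cone `V_{∞+}`. -/
def VposD : Set (Fin 3 → ℝ) := {x | ∃ c : ℝ, 0 ≤ c ∧ ∃ ω ∈ OmegaD, x = c • ω}

/-- The dual cone `V*_{∞+}`. -/
def VdualD : Set (Fin 3 → ℝ) := {x | ∃ c : ℝ, 0 ≤ c ∧ ∃ f ∈ EffD, x = c • f}

/-- A state of `Ω_∞ ⊗_max Ω_∞`: a normalized, cone-preserving linear map. -/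
def IsStateD (η : (Fin 3 → ℝ) →ₗ[ℝ] (Fin 3 → ℝ)) : Prop :=
  (∀ x ∈ VdualD, η x ∈ VposD) ∧ dot3 uEff (η uEff) = 1

/-- A binary observable on `Ω_∞`. -/
def IsObservableD (A : (Fin 3 → ℝ) × (Fin 3 → ℝ)) : Prop :=
  A.1 ∈ EffD ∧ A.2 ∈ EffD ∧ A.1 + A.2 = uEff

/-- The observable `E_∞(θ) = (e_∞(θ), u - e_∞(θ))`. -/
def EObsD (t : ℝ) : (Fin 3 → ℝ) × (Fin 3 → ℝ) := (eD t, uEff - eD t)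

/-- The correlator `E(st)`. -/
def corr (η : (Fin 3 → ℝ) →ₗ[ℝ] (Fin 3 → ℝ)) (A B : (Fin 3 → ℝ) × (Fin 3 → ℝ)) : ℝ :=
  dot3 B.1 (η A.1) - dot3 B.2 (η A.1) - dot3 B.1 (η A.2) + dot3 B.2 (η A.2)

/-- The CHSH value. -/
def CHSH (η : (Fin 3 → ℝ) →ₗ[ℝ] (Fin 3 → ℝ))
    (A0 A1 B0 B1 : (Fin 3 → ℝ) × (Fin 3 → ℝ)) : ℝ :=
  corr η A0 B0 + corr η A0 B1 + corr η A1 B0 - corr η A1 B1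

/-- `GL(Ω_∞)`: linear bijections preserving the disc state space.  Its elements are
exactly the maximally entangled states of `Ω_∞ ⊗_max Ω_∞`. -/
def GLOmegaD : Set ((Fin 3 → ℝ) →ₗ[ℝ] (Fin 3 → ℝ)) :=
  {T | Function.Bijective T ∧ T '' OmegaD = OmegaD}

/-!
Write a binary observable as the vector `a = A⁰ - A¹`; then `CHSH = ⟨b₀, η(a₀ + a₁)⟩ +
⟨b₁, η(a₀ - a₁)⟩`. The cone of the disc is the Lorentz cone `{v : ‖(v₀, v₁)‖ ≤ v₂}`, and `u ± a`
lies in it. So `|⟨b, z⟩| ≤ max ‖(z₀, z₁)‖ |z₂|`, while `c = η a₀` and `d = η a₁` satisfy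
`‖m ± c‖ ≤ 1 ± c₂`, `‖m ± d‖ ≤ 1 ± d₂` for `m` the planar part of `η u`. The triangle inequality and
the parallelogram law then bound `|CHSH|` by `2√2`.

A maximally entangled state `T` maps the disc onto itself, so it and its inverse do not lengthen
vectors of the disc's plane: `T` is an isometry there. With `α = 0`, `β = π/2` and `γ`, `δ` the
directions of `T(1, ±1, 0)`, its CHSH value is `‖(1, 1)‖ + ‖(1, -1)‖ = 2√2`.
-/

open Real

/-- The coordinates `(x, y)` of a vector `(x, y, z)`, as a point of the plane `ℂ`. -/
def planar : (Fin 3 → ℝ) →ₗ[ℝ] ℂ where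
  toFun v := ⟨v 0, v 1⟩
  map_add' _ _ := Complex.ext rfl rfl
  map_smul' _ _ := Complex.ext (by simp) (by simp)

@[simp] lemma planar_re (v : Fin 3 → ℝ) : (planar v).re = v 0 := rfl

@[simp] lemma planar_im (v : Fin 3 → ℝ) : (planar v).im = v 1 := rfl

@[simp] lemma planar_uEff : planar uEff = 0 := Complex.ext rfl rfl

lemma sq_norm_planar (v : Fin 3 → ℝ) : ‖planar v‖ ^ 2 = v 0 ^ 2 + v 1 ^ 2 := by
  rw [Complex.sq_norm, Complex.normSq_apply, planar_re, planar_im]; ring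

lemma Complex.real_inner_eq_re_mul_add_im_mul (w z : ℂ) :
    inner ℝ w z = w.re * z.re + w.im * z.im := by
  simp only [Complex.inner, Complex.mul_re, Complex.conj_re, Complex.conj_im]; ring

lemma dot3_eq_inner_planar (v w : Fin 3 → ℝ) :
    dot3 v w = inner ℝ (planar v) (planar w) + v 2 * w 2 := by
  simp only [dot3, Fin.sum_univ_three, Complex.real_inner_eq_re_mul_add_im_mul, planar_re,
    planar_im]

lemma mem_OmegaD_iff {v : Fin 3 → ℝ} : v ∈ OmegaD ↔ ‖planar v‖ ≤ 1 ∧ v 2 = 1 := by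
  rw [← sq_le_one_iff₀ (norm_nonneg _), sq_norm_planar]; rfl

lemma norm_planar_le_of_mem_VposD {x : Fin 3 → ℝ} (hx : x ∈ VposD) : ‖planar x‖ ≤ x 2 := by
  obtain ⟨c, hc, ω, hω, rfl⟩ := hx
  obtain ⟨hω1, hω2⟩ := mem_OmegaD_iff.mp hω
  simpa [norm_smul, abs_of_nonneg hc, hω2] using mul_le_of_le_one_right hc hω1

lemma norm_planar_le_of_mem_EffD {f : Fin 3 → ℝ} (hf : f ∈ EffD) :
    ‖planar f‖ ≤ f 2 ∧ ‖planar f‖ ≤ 1 - f 2 := by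
  set w : ℂ := ‖planar f‖⁻¹ • planar f
  have hw : ‖w‖ ≤ 1 := by
    rw [norm_smul, norm_inv, norm_norm]; exact inv_mul_le_one
  -- `⟪p, ‖p‖⁻¹ • p⟫ = ‖p‖` holds also for `p = 0`, thanks to `0⁻¹ = 0`
  have hinner : inner ℝ (planar f) w = ‖planar f‖ := by
    rw [real_inner_smul_right, real_inner_self_eq_norm_sq, sq, ← mul_assoc, inv_mul_mul_self]
  have hpair : ∀ z : ℂ, ‖z‖ ≤ 1 → inner ℝ (planar f) z + f 2 ∈ Set.Icc (0 : ℝ) 1 := by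
    intro z hz
    have hmem : (![z.re, z.im, 1] : Fin 3 → ℝ) ∈ OmegaD := mem_OmegaD_iff.mpr ⟨hz, rfl⟩
    simpa [dot3_eq_inner_planar, Complex.real_inner_eq_re_mul_add_im_mul] using hf _ hmem
  have hplus := hpair w hw
  have hminus := hpair (-w) (by rwa [norm_neg])
  rw [inner_neg_right, hinner] at hminus
  rw [hinner] at hplus
  exact ⟨by linarith [hminus.1], by linarith [hplus.2]⟩

/-- The `±1`-valued observable `A⁰ - A¹` attached to a binary observable. -/
def obsVec (A : (Fin 3 → ℝ) × (Fin 3 → ℝ)) : Fin 3 → ℝ := A.1 - A.2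

lemma norm_planar_add_abs_le_one {A : (Fin 3 → ℝ) × (Fin 3 → ℝ)} (hA : IsObservableD A) :
    ‖planar (obsVec A)‖ + |obsVec A 2| ≤ 1 := by
  have hA2 : A.2 = uEff - A.1 := eq_sub_of_add_eq' hA.2.2
  have hvec : obsVec A = (2 : ℝ) • A.1 - uEff := by rw [obsVec, hA2]; module
  obtain ⟨hlo, hhi⟩ := norm_planar_le_of_mem_EffD hA.1
  have h2 : obsVec A 2 = 2 * A.1 2 - 1 := by simp [hvec, uEff]
  rw [hvec, map_sub, map_smul, planar_uEff, sub_zero, norm_smul, Real.norm_two, ← hvec, h2]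
  rcases abs_cases (2 * A.1 2 - 1) with ⟨h, -⟩ | ⟨h, -⟩ <;> rw [h] <;> linarith

lemma corr_eq_dot3 (η : (Fin 3 → ℝ) →ₗ[ℝ] (Fin 3 → ℝ)) (A B : (Fin 3 → ℝ) × (Fin 3 → ℝ)) :
    corr η A B = dot3 (obsVec B) (η (obsVec A)) := by
  simp only [corr, obsVec, map_sub, dot3_eq_inner_planar, inner_sub_left, inner_sub_right,
    Pi.sub_apply]
  ring

lemma CHSH_eq_dot3 (η : (Fin 3 → ℝ) →ₗ[ℝ] (Fin 3 → ℝ))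
    (A0 A1 B0 B1 : (Fin 3 → ℝ) × (Fin 3 → ℝ)) :
    CHSH η A0 A1 B0 B1 = dot3 (obsVec B0) (η (obsVec A0 + obsVec A1)) +
      dot3 (obsVec B1) (η (obsVec A0 - obsVec A1)) := by
  simp only [CHSH, corr_eq_dot3, map_add, map_sub, dot3_eq_inner_planar, inner_add_right,
    inner_sub_right, Pi.add_apply, Pi.sub_apply]
  ring

section LorentzCone

variable {E : Type*} [SeminormedAddCommGroup E]

lemma abs_inner_add_mul_le_max [InnerProductSpace ℝ E] {x y : E} {s t : ℝ}
    (h : ‖x‖ + |s| ≤ 1) : |inner ℝ x y + s * t| ≤ max ‖y‖ |t| := by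
  have hy := le_max_left ‖y‖ |t|
  have ht := le_max_right ‖y‖ |t|
  calc |inner ℝ x y + s * t| ≤ ‖x‖ * ‖y‖ + |s| * |t| := by
        rw [← abs_mul]
        exact (abs_add_le _ _).trans (by gcongr; exact abs_real_inner_le_norm x y)
    _ ≤ ‖x‖ * max ‖y‖ |t| + |s| * max ‖y‖ |t| := by gcongr
    _ ≤ max ‖y‖ |t| := by nlinarith [(norm_nonneg y).trans hy]

lemma add_norm_add_norm_sub_le_two_mul_sqrt_two [InnerProductSpace ℝ E] {c d : E}
    (hc : ‖c‖ ≤ 1) (hd : ‖d‖ ≤ 1) : ‖c + d‖ + ‖c - d‖ ≤ 2 * √2 := by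
  have hpar := parallelogram_law_with_norm ℝ c d
  have hsq : (‖c + d‖ + ‖c - d‖) ^ 2 ≤ (2 * √2) ^ 2 := by
    rw [mul_pow, Real.sq_sqrt zero_le_two]
    nlinarith [sq_nonneg (‖c + d‖ - ‖c - d‖), mul_le_one₀ hc (norm_nonneg c) hc,
      mul_le_one₀ hd (norm_nonneg d) hd]
  exact (pow_le_pow_iff_left₀ (by positivity) (by positivity) two_ne_zero).mp hsq

variable {m c d : E} {s t : ℝ}

lemma norm_le_one_of_norm_add_sub_le [NormedSpace ℝ E] (hp : ‖m + c‖ ≤ 1 + s)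
    (hm : ‖m - c‖ ≤ 1 - s) : ‖c‖ ≤ 1 ∧ |s| ≤ 1 := by
  have h2c : ‖(m + c) - (m - c)‖ = 2 * ‖c‖ := by
    rw [add_sub_sub_cancel, ← two_smul ℝ, norm_smul, Real.norm_two]
  have := norm_sub_le (m + c) (m - c)
  exact ⟨by linarith,
    abs_le.mpr ⟨by linarith [norm_nonneg (m + c)], by linarith [norm_nonneg (m - c)]⟩⟩

lemma norm_add_le_two_sub_abs_sub (hcp : ‖m + c‖ ≤ 1 + s) (hcm : ‖m - c‖ ≤ 1 - s)
    (hdp : ‖m + d‖ ≤ 1 + t) (hdm : ‖m - d‖ ≤ 1 - t) : ‖c + d‖ ≤ 2 - |s - t| := by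
  have h₁ : ‖c + d‖ ≤ ‖m + c‖ + ‖m - d‖ := by
    simpa only [add_sub_sub_cancel, add_comm c] using norm_sub_le (m + c) (m - d)
  have h₂ : ‖c + d‖ ≤ ‖m + d‖ + ‖m - c‖ := by
    simpa only [add_sub_sub_cancel, add_comm d] using norm_sub_le (m + d) (m - c)
  rcases abs_cases (s - t) with ⟨h, -⟩ | ⟨h, -⟩ <;> rw [h] <;> linarith

lemma norm_sub_le_two_sub_abs_add (hcp : ‖m + c‖ ≤ 1 + s) (hcm : ‖m - c‖ ≤ 1 - s)
    (hdp : ‖m + d‖ ≤ 1 + t) (hdm : ‖m - d‖ ≤ 1 - t) : ‖c - d‖ ≤ 2 - |s + t| := by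
  have h₁ : ‖c - d‖ ≤ ‖m + c‖ + ‖m + d‖ := by
    simpa only [add_sub_add_left_eq_sub] using norm_sub_le (m + c) (m + d)
  have h₂ : ‖c - d‖ ≤ ‖m - d‖ + ‖m - c‖ := by
    simpa only [sub_sub_sub_cancel_left] using norm_sub_le (m - d) (m - c)
  rcases abs_cases (s + t) with ⟨h, -⟩ | ⟨h, -⟩ <;> rw [h] <;> linarith

/-- Tsirelson's bound for the Lorentz cone `{(x, s) : ‖x‖ ≤ s}` over `E`, where `m` plays the
spatial part of `η u` and `c`, `d` those of `η a₀`, `η a₁`. -/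
lemma max_add_max_le_two_mul_sqrt_two [InnerProductSpace ℝ E] (hcp : ‖m + c‖ ≤ 1 + s)
    (hcm : ‖m - c‖ ≤ 1 - s) (hdp : ‖m + d‖ ≤ 1 + t) (hdm : ‖m - d‖ ≤ 1 - t) :
    max ‖c + d‖ |s + t| + max ‖c - d‖ |s - t| ≤ 2 * √2 := by
  obtain ⟨hc, hs⟩ := norm_le_one_of_norm_add_sub_le hcp hcm
  obtain ⟨hd, ht⟩ := norm_le_one_of_norm_add_sub_le hdp hdm
  have hplus := norm_add_le_two_sub_abs_sub hcp hcm hdp hdm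
  have hminus := norm_sub_le_two_sub_abs_add hcp hcm hdp hdm
  have hnorms := add_norm_add_norm_sub_le_two_mul_sqrt_two hc hd
  have htwo : (2 : ℝ) ≤ 2 * √2 := by
    nlinarith [Real.one_lt_sqrt_two]
  have habs : |s + t| + |s - t| ≤ 2 := by
    rw [abs_le] at hs ht
    rcases abs_cases (s + t) with ⟨h, -⟩ | ⟨h, -⟩ <;>
      rcases abs_cases (s - t) with ⟨h', -⟩ | ⟨h', -⟩ <;> rw [h, h'] <;> linarith
  rcases max_cases ‖c + d‖ |s + t| with ⟨h, -⟩ | ⟨h, -⟩ <;>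
    rcases max_cases ‖c - d‖ |s - t| with ⟨h', -⟩ | ⟨h', -⟩ <;> rw [h, h'] <;> linarith

end LorentzCone

section States

variable {η : (Fin 3 → ℝ) →ₗ[ℝ] (Fin 3 → ℝ)}

lemma IsStateD.apply_uEff_two (hη : IsStateD η) : η uEff 2 = 1 := by
  simpa [dot3_eq_inner_planar, uEff] using hη.2

lemma IsStateD.norm_planar_le (hη : IsStateD η) {f : Fin 3 → ℝ} (hf : f ∈ EffD) {r : ℝ}
    (hr : 0 ≤ r) : ‖planar (η (r • f))‖ ≤ η (r • f) 2 :=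
  norm_planar_le_of_mem_VposD (hη.1 _ ⟨r, hr, f, hf, rfl⟩)

lemma IsStateD.norm_planar_add_le (hη : IsStateD η) {A : (Fin 3 → ℝ) × (Fin 3 → ℝ)}
    (hA : IsObservableD A) :
    ‖planar (η uEff) + planar (η (obsVec A))‖ ≤ 1 + η (obsVec A) 2 ∧
      ‖planar (η uEff) - planar (η (obsVec A))‖ ≤ 1 - η (obsVec A) 2 := by
  have hplus : uEff + obsVec A = (2 : ℝ) • A.1 := by rw [← hA.2.2, obsVec]; module
  have hminus : uEff - obsVec A = (2 : ℝ) • A.2 := by rw [← hA.2.2, obsVec]; module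
  have h₁ := hη.norm_planar_le hA.1 zero_le_two
  have h₂ := hη.norm_planar_le hA.2.1 zero_le_two
  rw [← hplus, map_add, map_add] at h₁
  rw [← hminus, map_sub, map_sub] at h₂
  rw [Pi.add_apply, hη.apply_uEff_two] at h₁
  rw [Pi.sub_apply, hη.apply_uEff_two] at h₂
  exact ⟨h₁, h₂⟩

lemma abs_dot3_obsVec_le {B : (Fin 3 → ℝ) × (Fin 3 → ℝ)} (hB : IsObservableD B)
    (z : Fin 3 → ℝ) : |dot3 (obsVec B) z| ≤ max ‖planar z‖ |z 2| := by
  rw [dot3_eq_inner_planar]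
  exact abs_inner_add_mul_le_max (norm_planar_add_abs_le_one hB)

theorem abs_CHSH_le_two_mul_sqrt_two (hη : IsStateD η)
    {A0 A1 B0 B1 : (Fin 3 → ℝ) × (Fin 3 → ℝ)}
    (hA0 : IsObservableD A0) (hA1 : IsObservableD A1)
    (hB0 : IsObservableD B0) (hB1 : IsObservableD B1) :
    |CHSH η A0 A1 B0 B1| ≤ 2 * √2 := by
  obtain ⟨hcp, hcm⟩ := hη.norm_planar_add_le hA0
  obtain ⟨hdp, hdm⟩ := hη.norm_planar_add_le hA1
  rw [CHSH_eq_dot3]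
  calc _ ≤ |dot3 (obsVec B0) (η (obsVec A0 + obsVec A1))| +
        |dot3 (obsVec B1) (η (obsVec A0 - obsVec A1))| := abs_add_le _ _
    _ ≤ _ := add_le_add (abs_dot3_obsVec_le hB0 _) (abs_dot3_obsVec_le hB1 _)
    _ ≤ 2 * √2 := by
      simp only [map_add, map_sub, Pi.add_apply, Pi.sub_apply]
      exact max_add_max_le_two_mul_sqrt_two hcp hcm hdp hdm

end States

lemma norm_planar (v : Fin 3 → ℝ) : ‖planar v‖ = √(v 0 ^ 2 + v 1 ^ 2) := by
  rw [← sq_norm_planar, Real.sqrt_sq (norm_nonneg _)]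

section Symmetries

variable {T : (Fin 3 → ℝ) →ₗ[ℝ] (Fin 3 → ℝ)}

lemma apply_two_eq_zero_and_norm_planar_le_one (hT : Set.MapsTo T OmegaD OmegaD)
    {x : Fin 3 → ℝ} (hx2 : x 2 = 0) (hx : ‖planar x‖ ≤ 1) :
    T x 2 = 0 ∧ ‖planar (T x)‖ ≤ 1 := by
  have hmem : ∀ y : Fin 3 → ℝ, y 2 = 0 → ‖planar y‖ ≤ 1 → T uEff + T y ∈ OmegaD := by
    intro y hy2 hy
    rw [← map_add]
    refine hT (mem_OmegaD_iff.mpr ⟨?_, ?_⟩)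
    · rwa [map_add, planar_uEff, zero_add]
    · simp [hy2, uEff]
  obtain ⟨hp, hp2⟩ := mem_OmegaD_iff.mp (hmem x hx2 hx)
  obtain ⟨hm, hm2⟩ := mem_OmegaD_iff.mp (hmem (-x) (by simp [hx2]) (by rwa [map_neg, norm_neg]))
  simp only [map_neg, map_add, map_sub, Pi.add_apply, Pi.neg_apply, ← sub_eq_add_neg]
    at hp hp2 hm hm2
  refine ⟨by linarith, (norm_le_one_of_norm_add_sub_le (m := planar (T uEff)) (s := 0) ?_ ?_).1⟩
    <;> simpa

lemma apply_two_eq_zero_and_norm_planar_le (hT : Set.MapsTo T OmegaD OmegaD)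
    {x : Fin 3 → ℝ} (hx2 : x 2 = 0) : T x 2 = 0 ∧ ‖planar (T x)‖ ≤ ‖planar x‖ := by
  by_cases hx : planar x = 0
  · have hx0 : x = 0 := by
      ext i
      fin_cases i
      exacts [congrArg Complex.re hx, congrArg Complex.im hx, hx2]
    simp [hx0]
  set r := ‖planar x‖
  have hr : 0 < r := norm_pos_iff.mpr hx
  have hxr : x = r • r⁻¹ • x := by rw [smul_inv_smul₀ hr.ne']
  obtain ⟨h2, hle⟩ := apply_two_eq_zero_and_norm_planar_le_one hT (x := r⁻¹ • x)
    (by simp [hx2]) (by rw [map_smul, norm_smul, norm_inv, norm_norm, inv_mul_cancel₀ hr.ne'])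
  rw [hxr, map_smul, Pi.smul_apply, h2, smul_zero, map_smul, norm_smul, Real.norm_of_nonneg hr.le]
  exact ⟨rfl, mul_le_of_le_one_right hr.le hle⟩

lemma norm_planar_apply_of_mem_GLOmegaD (hT : T ∈ GLOmegaD) {x : Fin 3 → ℝ} (hx2 : x 2 = 0) :
    ‖planar (T x)‖ = ‖planar x‖ := by
  have hmaps : Set.MapsTo T OmegaD OmegaD := fun ω hω => hT.2 ▸ Set.mem_image_of_mem T hω
  set S := LinearEquiv.ofBijective T hT.1
  have hmaps_symm : Set.MapsTo S.symm OmegaD OmegaD := by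
    intro p hp
    rw [← hT.2] at hp
    obtain ⟨ω, hω, rfl⟩ := hp
    rwa [LinearEquiv.ofBijective_symm_apply_apply]
  obtain ⟨h2, hle⟩ := apply_two_eq_zero_and_norm_planar_le hmaps hx2
  have hge := (apply_two_eq_zero_and_norm_planar_le (T := S.symm.toLinearMap) hmaps_symm h2).2
  rw [LinearEquiv.coe_coe, LinearEquiv.ofBijective_symm_apply_apply] at hge
  exact hle.antisymm hge

end Symmetries

lemma exists_mem_Ico_re_mul_cos_add_im_mul_sin_eq_norm (p : ℂ) :
    ∃ θ ∈ Set.Ico 0 (2 * π), p.re * Real.cos θ + p.im * Real.sin θ = ‖p‖ := by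
  refine ⟨toIcoMod two_pi_pos 0 p.arg, by simpa using toIcoMod_mem_Ico two_pi_pos 0 p.arg, ?_⟩
  rw [← self_sub_toIcoDiv_zsmul, Real.cos_periodic.sub_zsmul_eq, Real.sin_periodic.sub_zsmul_eq]
  rcases eq_or_ne p 0 with rfl | hp
  · simp
  rw [Complex.cos_arg hp, Complex.sin_arg]
  have hnorm : ‖p‖ ≠ 0 := norm_ne_zero_iff.mpr hp
  field_simp
  rw [Complex.sq_norm, Complex.normSq_apply]
  ring

lemma obsVec_EObsD (θ : ℝ) : obsVec (EObsD θ) = ![Real.cos θ, Real.sin θ, 0] := by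
  ext i
  fin_cases i <;> norm_num [obsVec, EObsD, eD, uEff]

lemma exists_mem_Ico_dot3_obsVec_EObsD_eq_norm (z : Fin 3 → ℝ) :
    ∃ θ ∈ Set.Ico 0 (2 * π), dot3 (obsVec (EObsD θ)) z = ‖planar z‖ := by
  obtain ⟨θ, hθ, h⟩ := exists_mem_Ico_re_mul_cos_add_im_mul_sin_eq_norm (planar z)
  refine ⟨θ, hθ, ?_⟩
  rw [← h, obsVec_EObsD]
  simp only [dot3, Fin.sum_univ_three, Matrix.cons_val_zero, Matrix.cons_val_one,
    Matrix.cons_val, zero_mul, add_zero, planar_re, planar_im]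
  ring

lemma CHSH_EObsD_zero_pi_div_two (η : (Fin 3 → ℝ) →ₗ[ℝ] (Fin 3 → ℝ)) (γ δ : ℝ) :
    CHSH η (EObsD 0) (EObsD (π / 2)) (EObsD γ) (EObsD δ) =
      dot3 (obsVec (EObsD γ)) (η ![1, 1, 0]) + dot3 (obsVec (EObsD δ)) (η ![1, -1, 0]) := by
  rw [CHSH_eq_dot3, obsVec_EObsD 0, obsVec_EObsD (π / 2)]
  congr 3 <;> ext i <;> fin_cases i <;> simp

/-- every maximally entangled state of the disc theory optimizes the CHSH
value for suitable angles `α⋆, β⋆, γ⋆, δ⋆ ∈ [0, 2π)`. -/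
theorem maxEnt_optimal_CHSH_disc
    (ηstar : (Fin 3 → ℝ) →ₗ[ℝ] (Fin 3 → ℝ)) (hstar : ηstar ∈ GLOmegaD) :
    ∃ α β γ δ : ℝ, α ∈ Set.Ico 0 (2 * Real.pi) ∧ β ∈ Set.Ico 0 (2 * Real.pi) ∧
      γ ∈ Set.Ico 0 (2 * Real.pi) ∧ δ ∈ Set.Ico 0 (2 * Real.pi) ∧
      ∀ η : (Fin 3 → ℝ) →ₗ[ℝ] (Fin 3 → ℝ), IsStateD η →
        ∀ A0 A1 B0 B1 : (Fin 3 → ℝ) × (Fin 3 → ℝ),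
          IsObservableD A0 → IsObservableD A1 → IsObservableD B0 → IsObservableD B1 →
          |CHSH η A0 A1 B0 B1| ≤ |CHSH ηstar (EObsD α) (EObsD β) (EObsD γ) (EObsD δ)| := by
  obtain ⟨γ, hγ, hγ_eq⟩ := exists_mem_Ico_dot3_obsVec_EObsD_eq_norm (ηstar ![1, 1, 0])
  obtain ⟨δ, hδ, hδ_eq⟩ := exists_mem_Ico_dot3_obsVec_EObsD_eq_norm (ηstar ![1, -1, 0])
  have hvalue : CHSH ηstar (EObsD 0) (EObsD (π / 2)) (EObsD γ) (EObsD δ) = 2 * √2 := by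
    rw [CHSH_EObsD_zero_pi_div_two, hγ_eq, hδ_eq, norm_planar_apply_of_mem_GLOmegaD hstar rfl,
      norm_planar_apply_of_mem_GLOmegaD hstar rfl, norm_planar, norm_planar]
    norm_num [two_mul]
  refine ⟨0, π / 2, γ, δ, ⟨le_rfl, by positivity⟩, ⟨by positivity, by linarith [Real.pi_pos]⟩,
    hγ, hδ, fun η hη A0 A1 B0 B1 hA0 hA1 hB0 hB1 => ?_⟩
  rw [hvalue, abs_of_pos (show (0 : ℝ) < 2 * √2 by positivity)]
  exact abs_CHSH_le_two_mul_sqrt_two hη hA0 hA1 hB0 hB1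
end
end

section
/- An element μ ∈ V_A ⊗ V_B belongs to Ω_A ⊗_max Ω_B if and only if the induced linear map μ̂ : V_A → V_B satisfies ⟨u_B, μ̂(u_A)⟩ = 1 and μ̂(V*_{A+}) ⊆ V_{B+}; moreover μ ↦ μ̂ is a bijection between Ω_A ⊗_max Ω_B and the set of linear maps T : V_A → V_B with ⟨u_B, T(u_A)⟩ = 1 and T(V*_{A+}) ⊆ V_{B+}. -/
noncomputable section

/-- Standard inner product on `ℝ^m`. -/
def dotm {m : ℕ} (v w : Fin m → ℝ) : ℝ := ∑ i, v i * w i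

/-- The effect space of a state space `Ω`. -/
def Eff {m : ℕ} (Ω : Set (Fin m → ℝ)) : Set (Fin m → ℝ) :=
  {e | ∀ ω ∈ Ω, dotm e ω ∈ Set.Icc (0 : ℝ) 1}

/-- The cone generated by a set of vectors. -/
def cone {m : ℕ} (S : Set (Fin m → ℝ)) : Set (Fin m → ℝ) :=
  {x | ∃ c : ℝ, 0 ≤ c ∧ ∃ s ∈ S, x = c • s}

/-- The pairing `⟨e ⊗ f, μ⟩_{AB}` where an element `μ ∈ V_A ⊗ V_B` is identified with a
matrix via the canonical isomorphism `ℝ^m ⊗ ℝ^{m'} ≅ Matrix (Fin m) (Fin m') ℝ`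
(which carries the induced inner product to the standard one). -/
def pairT {m m' : ℕ} (μ : Matrix (Fin m) (Fin m') ℝ) (e : Fin m → ℝ) (f : Fin m' → ℝ) : ℝ :=
  ∑ i, ∑ j, e i * f j * μ i j

/-- The maximal tensor product `Ω_A ⊗_max Ω_B`. -/
def maxTensor {m m' : ℕ} (ΩA : Set (Fin m → ℝ)) (ΩB : Set (Fin m' → ℝ))
    (uA : Fin m → ℝ) (uB : Fin m' → ℝ) : Set (Matrix (Fin m) (Fin m') ℝ) :=
  {μ | pairT μ uA uB = 1 ∧ ∀ e ∈ Eff ΩA, ∀ f ∈ Eff ΩB, 0 ≤ pairT μ e f}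

/-- The induced linear map `μ̂ : V_A → V_B`, determined by `⟨f, μ̂(e)⟩ = ⟨e ⊗ f, μ⟩_{AB}`. -/
def hatMap {m m' : ℕ} (μ : Matrix (Fin m) (Fin m') ℝ) : (Fin m → ℝ) →ₗ[ℝ] (Fin m' → ℝ) :=
  μ.transpose.mulVecLin

/-!
Since `⟨e ⊗ f, μ⟩ = ⟨f, μ̂ e⟩`, membership in `Ω_A ⊗_max Ω_B` says that `μ̂` sends every effect
of `A` to a vector on which all effects of `B` are nonnegative, and the point is that these
vectors form exactly the cone over `Ω_B`. A functional nonnegative on the compact set `Ω_B` is a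
positive multiple of an effect, so such a vector `w` is nonnegative on the whole dual cone of `Ω_B`.
If `⟨u_B, w⟩ = 0`, then `w = 0`, because any functional becomes nonnegative on `Ω_B` after adding a
large multiple of `u_B`. Otherwise `w / ⟨u_B, w⟩` lies in `Ω_B`: a Hahn–Banach functional
separating it from `Ω_B`, subtracted from a multiple of `u_B`, would be positive on `Ω_B` but
negative at that point. Finally `μ ↦ μ̂` is a linear isomorphism from matrices to linear maps.
-/

section

variable {m m' : ℕ}

@[simp] lemma dotm_add_left (v v' w : Fin m → ℝ) : dotm (v + v') w = dotm v w + dotm v' w :=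
  add_dotProduct v v' w

@[simp] lemma dotm_sub_left (v v' w : Fin m → ℝ) : dotm (v - v') w = dotm v w - dotm v' w :=
  sub_dotProduct v v' w

@[simp] lemma dotm_neg_left (v w : Fin m → ℝ) : dotm (-v) w = -dotm v w :=
  neg_dotProduct v w

@[simp] lemma dotm_smul_left (c : ℝ) (v w : Fin m → ℝ) : dotm (c • v) w = c * dotm v w :=
  smul_dotProduct c v w

@[simp] lemma dotm_smul_right (c : ℝ) (v w : Fin m → ℝ) : dotm v (c • w) = c * dotm v w :=
  dotProduct_smul c v w

lemma pairT_eq_dotm_hatMap (μ : Matrix (Fin m) (Fin m') ℝ) (e : Fin m → ℝ)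
    (f : Fin m' → ℝ) : pairT μ e f = dotm f (hatMap μ e) := by
  simp only [pairT, dotm, hatMap, Matrix.mulVecLin_apply, Matrix.mulVec, dotProduct,
    Matrix.transpose_apply, Finset.mul_sum]
  rw [Finset.sum_comm]
  exact Finset.sum_congr rfl fun j _ => Finset.sum_congr rfl fun i _ => by ring

lemma hatMap_bijective :
    Function.Bijective (hatMap : Matrix (Fin m) (Fin m') ℝ → _) :=
  Matrix.toLin'.bijective.comp (Matrix.transposeLinearEquiv _ _ ℝ ℝ).bijective

lemma exists_dotm_eq_of_strongDual (φ : StrongDual ℝ (Fin m → ℝ)) :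
    ∃ g : Fin m → ℝ, ∀ x, φ x = dotm g x :=
  ⟨fun i => φ fun j => if i = j then 1 else 0, fun x => by
    change (φ : (Fin m → ℝ) →ₗ[ℝ] ℝ) x = _
    rw [LinearMap.pi_apply_eq_sum_univ, dotm]
    exact Finset.sum_congr rfl fun i _ => mul_comm _ _⟩

lemma IsCompact.exists_pos_abs_dotm_le {K : Set (Fin m → ℝ)} (hK : IsCompact K)
    (g : Fin m → ℝ) : ∃ M > 0, ∀ ξ ∈ K, |dotm g ξ| ≤ M := by
  obtain ⟨C, hC⟩ := hK.exists_bound_of_continuousOn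
    (f := fun ξ => dotm g ξ) (by unfold dotm; fun_prop)
  exact ⟨max C 1, by positivity, fun ξ hξ => (hC ξ hξ).trans (le_max_left _ _)⟩

def dualCone (K : Set (Fin m → ℝ)) : Set (Fin m → ℝ) :=
  {g | ∀ ξ ∈ K, 0 ≤ dotm g ξ}

section ConeDuality

variable {K : Set (Fin m → ℝ)} {u w : Fin m → ℝ}

lemma mem_Eff_of_forall_dotm_eq_one (hu : ∀ ξ ∈ K, dotm u ξ = 1) : u ∈ Eff K :=
  fun ξ hξ => by simp [hu ξ hξ]

lemma zero_mem_Eff : (0 : Fin m → ℝ) ∈ Eff K :=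
  fun _ _ => by simp [dotm]

lemma nonempty_of_mem_cone (hw : w ∈ cone K) : K.Nonempty := by
  obtain ⟨-, -, ξ, hξ, -⟩ := hw
  exact ⟨ξ, hξ⟩

lemma mapsTo_cone_iff {S : Set (Fin m' → ℝ)} (T : (Fin m' → ℝ) →ₗ[ℝ] (Fin m → ℝ)) :
    Set.MapsTo T (cone S) (cone K) ↔ Set.MapsTo T S (cone K) := by
  refine ⟨fun h s hs => h ⟨1, zero_le_one, s, hs, (one_smul ℝ s).symm⟩, ?_⟩
  rintro h _ ⟨c, hc, s, hs, rfl⟩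
  obtain ⟨c', hc', ξ, hξ, hTs⟩ := h hs
  exact ⟨c * c', mul_nonneg hc hc', ξ, hξ, by rw [map_smul, hTs, smul_smul]⟩

lemma dotm_nonneg_of_mem_cone {f : Fin m → ℝ} (hf : f ∈ Eff K) (hw : w ∈ cone K) :
    0 ≤ dotm f w := by
  obtain ⟨c, hc, ξ, hξ, rfl⟩ := hw
  rw [dotm_smul_right]
  exact mul_nonneg hc (hf ξ hξ).1

lemma dotm_nonneg_of_mem_dualCone (hK : IsCompact K) (hw : ∀ f ∈ Eff K, 0 ≤ dotm f w)
    {g : Fin m → ℝ} (hg : g ∈ dualCone K) : 0 ≤ dotm g w := by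
  obtain ⟨M, hM, hgM⟩ := hK.exists_pos_abs_dotm_le g
  have hEff : M⁻¹ • g ∈ Eff K := fun ξ hξ => by
    rw [dotm_smul_left]
    refine ⟨by have := hg ξ hξ; positivity, ?_⟩
    rw [inv_mul_le_one₀ hM]
    exact (le_abs_self _).trans (hgM ξ hξ)
  have := hw _ hEff
  rw [dotm_smul_left] at this
  exact nonneg_of_mul_nonneg_right this (inv_pos.mpr hM)

lemma eq_zero_of_nonneg_on_dualCone (hK : IsCompact K) (hu : ∀ ξ ∈ K, dotm u ξ = 1)
    (hw : ∀ g ∈ dualCone K, 0 ≤ dotm g w) (huw : dotm u w = 0) : w = 0 := by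
  obtain ⟨M, -, hM⟩ := hK.exists_pos_abs_dotm_le (-w)
  have hshift : -w + M • u ∈ dualCone K := fun ξ hξ => by
    rw [dotm_add_left, dotm_smul_left, hu ξ hξ, mul_one]
    linarith [neg_abs_le (dotm (-w) ξ), hM ξ hξ]
  have := hw _ hshift
  rw [dotm_add_left, dotm_smul_left, huw, mul_zero, add_zero, dotm_neg_left] at this
  refine dotProduct_self_eq_zero.mp (le_antisymm (neg_nonneg.mp this) ?_)
  simpa using dotProduct_star_self_nonneg w

lemma mem_of_nonneg_on_dualCone (hKc : IsClosed K) (hKconv : Convex ℝ K)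
    (hu : ∀ ξ ∈ K, dotm u ξ = 1) (hw : ∀ g ∈ dualCone K, 0 ≤ dotm g w) (huw : dotm u w = 1) :
    w ∈ K := by
  by_contra hwK
  obtain ⟨φ, t, hφK, hφw⟩ := geometric_hahn_banach_closed_point hKconv hKc hwK
  obtain ⟨g, hg⟩ := exists_dotm_eq_of_strongDual φ
  have hsep : ∀ x, dotm (t • u - g) x = t * dotm u x - φ x := fun x => by
    rw [dotm_sub_left, dotm_smul_left, hg]
  have := hw (t • u - g) fun ξ hξ => by
    rw [hsep, hu ξ hξ]
    linarith [hφK ξ hξ]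
  rw [hsep, huw] at this
  linarith

theorem mem_cone_iff_forall_Eff (hK : IsCompact K) (hKconv : Convex ℝ K) (hKne : K.Nonempty)
    (hu : ∀ ξ ∈ K, dotm u ξ = 1) : w ∈ cone K ↔ ∀ f ∈ Eff K, 0 ≤ dotm f w := by
  refine ⟨fun hw f hf => dotm_nonneg_of_mem_cone hf hw, fun hw => ?_⟩
  have hdual : ∀ g ∈ dualCone K, 0 ≤ dotm g w := fun _ => dotm_nonneg_of_mem_dualCone hK hw
  obtain hc | hc := (hw u (mem_Eff_of_forall_dotm_eq_one hu)).eq_or_lt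
  · obtain ⟨ξ, hξ⟩ := hKne
    exact ⟨0, le_rfl, ξ, hξ, by rw [eq_zero_of_nonneg_on_dualCone hK hu hdual hc.symm, zero_smul]⟩
  · have hv : (dotm u w)⁻¹ • w ∈ K := by
      refine mem_of_nonneg_on_dualCone hK.isClosed hKconv hu (fun g hg => ?_) ?_
      · rw [dotm_smul_right]
        exact mul_nonneg (inv_nonneg.mpr hc.le) (hdual g hg)
      · rw [dotm_smul_right]
        exact inv_mul_cancel₀ hc.ne'
    exact ⟨dotm u w, hc.le, _, hv, by rw [smul_smul, mul_inv_cancel₀ hc.ne', one_smul]⟩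

end ConeDuality

section MaxTensor

variable {ΩA : Set (Fin m → ℝ)} {ΩB : Set (Fin m' → ℝ)} {uA : Fin m → ℝ} {uB : Fin m' → ℝ}

theorem maxTensor_eq_preimage_hatMap (hBcomp : IsCompact ΩB) (hBconv : Convex ℝ ΩB)
    (huA : ∀ ω ∈ ΩA, dotm uA ω = 1) (huB : ∀ ξ ∈ ΩB, dotm uB ξ = 1) :
    maxTensor ΩA ΩB uA uB = hatMap ⁻¹'
      {T | dotm uB (T uA) = 1 ∧ Set.MapsTo T (cone (Eff ΩA)) (cone ΩB)} := by
  ext μ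
  simp only [maxTensor, Set.mem_ofPred_eq, pairT_eq_dotm_hatMap, mapsTo_cone_iff]
  refine and_congr_right fun hnorm => ?_
  rcases ΩB.eq_empty_or_nonempty with rfl | hne
  · refine iff_of_false (fun h => ?_) (fun h => ?_)
    · have := h uA (mem_Eff_of_forall_dotm_eq_one huA) (-uB) fun _ h => h.elim
      rw [dotm_neg_left, hnorm] at this
      norm_num at this
    · exact Set.not_nonempty_empty (nonempty_of_mem_cone (h zero_mem_Eff))
  · exact forall₂_congr fun e _ => (mem_cone_iff_forall_Eff hBcomp hBconv hne huB).symm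

end MaxTensor

end

theorem maxTensor_iff_conePreserving_general {m m' : ℕ}
    (ΩA : Set (Fin m → ℝ)) (ΩB : Set (Fin m' → ℝ))
    (hBcomp : IsCompact ΩB) (hBconv : Convex ℝ ΩB)
    (uA : Fin m → ℝ) (huA : ∀ ω ∈ ΩA, dotm uA ω = 1)
    (uB : Fin m' → ℝ) (huB : ∀ ξ ∈ ΩB, dotm uB ξ = 1) :
    (∀ μ : Matrix (Fin m) (Fin m') ℝ,
      μ ∈ maxTensor ΩA ΩB uA uB ↔
        (dotm uB (hatMap μ uA) = 1 ∧ ∀ x ∈ cone (Eff ΩA), hatMap μ x ∈ cone ΩB)) ∧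
    Set.BijOn (fun μ : Matrix (Fin m) (Fin m') ℝ => hatMap μ) (maxTensor ΩA ΩB uA uB)
      {T : (Fin m → ℝ) →ₗ[ℝ] (Fin m' → ℝ) |
        dotm uB (T uA) = 1 ∧ ∀ x ∈ cone (Eff ΩA), T x ∈ cone ΩB} := by
  rw [maxTensor_eq_preimage_hatMap hBcomp hBconv huA huB]
  exact ⟨fun μ => Iff.rfl, hatMap_bijective.bijOn_preimage⟩

/-- `μ ∈ Ω_A ⊗_max Ω_B` iff the induced map `μ̂` is normalized and
cone-preserving, and `μ ↦ μ̂` is a bijection between `Ω_A ⊗_max Ω_B` and the set of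
normalized cone-preserving linear maps. -/
theorem maxTensor_iff_conePreserving {m m' : ℕ}
    (ΩA : Set (Fin m → ℝ)) (ΩB : Set (Fin m' → ℝ))
    (hAcomp : IsCompact ΩA) (hAconv : Convex ℝ ΩA) (hA0 : (0 : Fin m → ℝ) ∉ ΩA)
    (hAspan : Submodule.span ℝ ΩA = ⊤)
    (hBcomp : IsCompact ΩB) (hBconv : Convex ℝ ΩB) (hB0 : (0 : Fin m' → ℝ) ∉ ΩB)
    (hBspan : Submodule.span ℝ ΩB = ⊤)
    (uA : Fin m → ℝ) (huA : ∀ ω ∈ ΩA, dotm uA ω = 1)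
    (uB : Fin m' → ℝ) (huB : ∀ ξ ∈ ΩB, dotm uB ξ = 1) :
    (∀ μ : Matrix (Fin m) (Fin m') ℝ,
      μ ∈ maxTensor ΩA ΩB uA uB ↔
        (dotm uB (hatMap μ uA) = 1 ∧ ∀ x ∈ cone (Eff ΩA), hatMap μ x ∈ cone ΩB)) ∧
    Set.BijOn (fun μ : Matrix (Fin m) (Fin m') ℝ => hatMap μ) (maxTensor ΩA ΩB uA uB)
      {T : (Fin m → ℝ) →ₗ[ℝ] (Fin m' → ℝ) |
        dotm uB (T uA) = 1 ∧ ∀ x ∈ cone (Eff ΩA), T x ∈ cone ΩB} :=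
  maxTensor_iff_conePreserving_general ΩA ΩB hBcomp hBconv uA huA uB huB
end
end
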